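/- Let β ≥ γ ≥ 0 with β + γ > 1. Then for all integers k₁, k₂, one has Σ_{n∈ℤ} ⟨n−k₁⟩^{-β} ⟨n−k₂⟩^{-γ} ≤ C · φ_β(k₁−k₂) / ⟨k₁−k₂⟩^{γ}, where C depends only on β and γ. -/

import Mathlib

/-- Japanese bracket `⟨x⟩ = (1+x²)^{1/2}`. -/
noncomputable def jb (x : ℝ) : ℝ := Real.sqrt (1 + x ^ 2)

/-- `φ_β(k) = Σ_{|n| ≤ |k|} ⟨n⟩^{-β}`. -/
noncomputable def phi (β : ℝ) (k : ℤ) : ℝ :=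
  ∑ n ∈ Finset.Icc (-|k|) |k|, jb n ^ (-β)

/-! Put `k = k₁ - k₂`; the two factors sit at `x = n - k₁` and `y = n - k₂`, with `y - x = k`.
Where `2|y| ≤ |k|` the first factor is `≲ ⟨k⟩^{-β}` and, as `γ ≤ β`, `⟨y⟩^{-γ} ≤ ⟨k⟩^{β-γ} ⟨y⟩^{-β}`,
so these terms add up to `≲ ⟨k⟩^{-γ} φ_β(k)`; symmetrically where `2|x| ≤ |k|`. Elsewhere both
`|x|` and `|y|` exceed `|k|/2`, the product is at most `⟨x⟩^{-β-γ} + ⟨y⟩^{-β-γ}`, and comparison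
with `∫ t^{-β-γ} dt` bounds the tail sums by `≲ ⟨k⟩^{1-β-γ}`. This is `≤ ⟨k⟩^{-γ} φ_β(k)` because
`φ_β(k)` has `2|k| + 1` terms, each at least `⟨k⟩^{-β}`. The series is bounded through its finite
partial sums, so no summability needs to be proved. -/

open Real Finset

lemma jb_pos (x : ℝ) : 0 < jb x := sqrt_pos.2 (by positivity)

lemma one_le_jb (x : ℝ) : 1 ≤ jb x := one_le_sqrt.2 (by nlinarith)

lemma abs_le_jb (x : ℝ) : |x| ≤ jb x := by
  rw [jb, ← sqrt_sq_eq_abs]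
  exact sqrt_le_sqrt (by linarith)

lemma jb_le_one_add_abs (x : ℝ) : jb x ≤ 1 + |x| :=
  sqrt_le_iff.2 ⟨by positivity, by nlinarith [abs_nonneg x, sq_abs x]⟩

lemma jb_le_jb {x y : ℝ} (h : |x| ≤ |y|) : jb x ≤ jb y :=
  sqrt_le_sqrt (by linarith [sq_le_sq.2 h])

lemma jb_le_two_mul_jb {x y : ℝ} (h : |x| ≤ 2 * |y|) : jb x ≤ 2 * jb y := by
  have hsq : x ^ 2 ≤ (2 * y) ^ 2 := sq_le_sq.2 (by rwa [abs_mul, abs_two])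
  calc jb x ≤ sqrt (2 ^ 2 * (1 + y ^ 2)) := sqrt_le_sqrt (by linarith)
    _ = 2 * jb y := by rw [sqrt_mul (by positivity), sqrt_sq zero_le_two, jb]

lemma rpow_neg_le_two_rpow_mul {a b t : ℝ} (ha : 0 < a) (hab : a ≤ 2 * b) (ht : 0 ≤ t) :
    b ^ (-t) ≤ 2 ^ t * a ^ (-t) :=
  calc b ^ (-t) ≤ (a / 2) ^ (-t) :=
        rpow_le_rpow_of_nonpos (by positivity) (by linarith) (neg_nonpos.2 ht)
    _ = 2 ^ t * a ^ (-t) := by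
        rw [div_rpow ha.le zero_le_two, rpow_neg zero_le_two, div_inv_eq_mul, mul_comm]

lemma jb_rpow_neg_le_of_abs_le {x y t : ℝ} (h : |x| ≤ |y|) (ht : 0 ≤ t) :
    jb y ^ (-t) ≤ jb x ^ (-t) :=
  rpow_le_rpow_of_nonpos (jb_pos x) (jb_le_jb h) (neg_nonpos.2 ht)

lemma jb_rpow_neg_add (x β γ : ℝ) : jb x ^ (-(β + γ)) = jb x ^ (-β) * jb x ^ (-γ) := by
  rw [neg_add, rpow_add (jb_pos x)]

lemma jb_rpow_nonneg (x t : ℝ) : 0 ≤ jb x ^ t := rpow_nonneg (jb_pos x).le t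

section Pointwise

variable {β γ : ℝ}

lemma jb_rpow_neg_mul_le_add (hβ : 0 ≤ β) (hγ : 0 ≤ γ) (x y : ℝ) :
    jb x ^ (-β) * jb y ^ (-γ) ≤ jb x ^ (-(β + γ)) + jb y ^ (-(β + γ)) := by
  rcases le_total |x| |y| with h | h
  · have : jb x ^ (-β) * jb y ^ (-γ) ≤ jb x ^ (-(β + γ)) := by
      rw [jb_rpow_neg_add]
      exact mul_le_mul_of_nonneg_left (jb_rpow_neg_le_of_abs_le h hγ) (jb_rpow_nonneg _ _)
    linarith [jb_rpow_nonneg y (-(β + γ))]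
  · have : jb x ^ (-β) * jb y ^ (-γ) ≤ jb y ^ (-(β + γ)) := by
      rw [jb_rpow_neg_add]
      exact mul_le_mul_of_nonneg_right (jb_rpow_neg_le_of_abs_le h hβ) (jb_rpow_nonneg _ _)
    linarith [jb_rpow_nonneg x (-(β + γ))]

lemma jb_rpow_neg_mul_le_of_two_mul_abs_right_le (hγ : 0 ≤ γ) (hβγ : γ ≤ β) {x y : ℝ}
    (h : 2 * |y| ≤ |y - x|) :
    jb x ^ (-β) * jb y ^ (-γ) ≤ 2 ^ β * jb (y - x) ^ (-γ) * jb y ^ (-β) := by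
  have hx : |y - x| ≤ 2 * |x| := by linarith [abs_sub y x]
  have hy : jb y ≤ jb (y - x) := jb_le_jb (by linarith [abs_nonneg y])
  have h₁ : jb x ^ (-β) ≤ 2 ^ β * jb (y - x) ^ (-β) :=
    rpow_neg_le_two_rpow_mul (jb_pos _) (jb_le_two_mul_jb hx) (hγ.trans hβγ)
  have h₂ : jb y ^ (-γ) ≤ jb y ^ (-β) * jb (y - x) ^ (β - γ) := by
    rw [show -γ = -β + (β - γ) by ring, rpow_add (jb_pos y)]
    exact mul_le_mul_of_nonneg_left (rpow_le_rpow (jb_pos y).le hy (by linarith))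
      (jb_rpow_nonneg _ _)
  calc jb x ^ (-β) * jb y ^ (-γ)
      ≤ 2 ^ β * jb (y - x) ^ (-β) * (jb y ^ (-β) * jb (y - x) ^ (β - γ)) :=
        mul_le_mul h₁ h₂ (jb_rpow_nonneg _ _) (mul_nonneg (by positivity) (jb_rpow_nonneg _ _))
    _ = 2 ^ β * jb (y - x) ^ (-γ) * jb y ^ (-β) := by
      rw [show -γ = -β + (β - γ) by ring, rpow_add (jb_pos _)]
      ring

lemma jb_rpow_neg_mul_le_of_two_mul_abs_left_le (hγ : 0 ≤ γ) {x y : ℝ}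
    (h : 2 * |x| ≤ |y - x|) :
    jb x ^ (-β) * jb y ^ (-γ) ≤ 2 ^ γ * jb (y - x) ^ (-γ) * jb x ^ (-β) := by
  have hy : |y - x| ≤ 2 * |y| := by linarith [abs_sub y x]
  have := rpow_neg_le_two_rpow_mul (jb_pos _) (jb_le_two_mul_jb hy) hγ
  calc jb x ^ (-β) * jb y ^ (-γ) ≤ jb x ^ (-β) * (2 ^ γ * jb (y - x) ^ (-γ)) :=
        mul_le_mul_of_nonneg_left this (jb_rpow_nonneg _ _)
    _ = _ := by ring

lemma jb_rpow_neg_mul_le_regions (hγ : 0 ≤ γ) (hβγ : γ ≤ β) (x y : ℝ) :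
    jb x ^ (-β) * jb y ^ (-γ) ≤
      2 ^ β * jb (y - x) ^ (-γ) * (if 2 * |y| ≤ |y - x| then jb y ^ (-β) else 0)
      + 2 ^ γ * jb (y - x) ^ (-γ) * (if 2 * |x| ≤ |y - x| then jb x ^ (-β) else 0)
      + (if |y - x| < 2 * |x| then jb x ^ (-(β + γ)) else 0)
      + (if |y - x| < 2 * |y| then jb y ^ (-(β + γ)) else 0) := by
  have hite (p : Prop) [Decidable p] (z t : ℝ) : 0 ≤ if p then jb z ^ t else 0 :=
    ite_nonneg (jb_rpow_nonneg z t) le_rfl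
  have hA := mul_nonneg (mul_nonneg (rpow_nonneg zero_le_two β) (jb_rpow_nonneg (y - x) (-γ)))
    (hite (2 * |y| ≤ |y - x|) y (-β))
  have hB := mul_nonneg (mul_nonneg (rpow_nonneg zero_le_two γ) (jb_rpow_nonneg (y - x) (-γ)))
    (hite (2 * |x| ≤ |y - x|) x (-β))
  have hx := hite (|y - x| < 2 * |x|) x (-(β + γ))
  have hy := hite (|y - x| < 2 * |y|) y (-(β + γ))
  by_cases h₁ : 2 * |y| ≤ |y - x|
  · rw [if_pos h₁] at hA ⊢
    linarith [jb_rpow_neg_mul_le_of_two_mul_abs_right_le hγ hβγ h₁]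
  by_cases h₂ : 2 * |x| ≤ |y - x|
  · rw [if_pos h₂] at hB ⊢
    linarith [jb_rpow_neg_mul_le_of_two_mul_abs_left_le (β := β) hγ h₂]
  rw [if_pos (not_le.1 h₂), if_pos (not_le.1 h₁)]
  linarith [jb_rpow_neg_mul_le_add (hγ.trans hβγ) hγ x y]

end Pointwise

lemma sum_ite_le_phi (β : ℝ) (k : ℤ) (G : Finset ℤ) :
    ∑ m ∈ G, (if 2 * |(m : ℝ)| ≤ |(k : ℝ)| then jb m ^ (-β) else 0) ≤ phi β k := by
  rw [← sum_filter]
  refine sum_le_sum_of_subset_of_nonneg (fun m hm => ?_) (fun _ _ _ => jb_rpow_nonneg _ _)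
  have hmk : 2 * |m| ≤ |k| := by exact_mod_cast (mem_filter.1 hm).2
  rw [mem_Icc, ← abs_le]
  linarith [abs_nonneg m]

lemma phi_nonneg (β : ℝ) (k : ℤ) : 0 ≤ phi β k :=
  sum_nonneg fun _ _ => jb_rpow_nonneg _ _

lemma jb_rpow_le_phi {β : ℝ} (hβ : 0 ≤ β) (k : ℤ) : jb k ^ (1 - β) ≤ phi β k := by
  have hcard : ((Icc (-|k|) |k|).card : ℝ) = 2 * |(k : ℝ)| + 1 := by
    rw [Int.card_Icc, ← Int.cast_natCast, Int.toNat_of_nonneg (by linarith [abs_nonneg k])]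
    push_cast
    ring
  have hterm : ∀ n ∈ Icc (-|k|) |k|, jb k ^ (-β) ≤ jb n ^ (-β) := fun n hn =>
    jb_rpow_neg_le_of_abs_le (by exact_mod_cast abs_le.2 (mem_Icc.1 hn)) hβ
  calc jb k ^ (1 - β) = jb k * jb k ^ (-β) := by
        rw [sub_eq_add_neg, rpow_add (jb_pos _), rpow_one]
    _ ≤ (2 * |(k : ℝ)| + 1) * jb k ^ (-β) := by
        gcongr
        · exact jb_rpow_nonneg _ _
        · linarith [jb_le_one_add_abs k, abs_nonneg (k : ℝ)]
    _ ≤ phi β k := by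
        rw [← hcard, ← nsmul_eq_mul]
        exact card_nsmul_le_sum _ _ _ hterm

lemma sum_natCast_add_one_rpow_neg_le {s : ℝ} (hs : 1 < s) {N : ℕ} (hN : 0 < N)
    (G : Finset ℕ) (hG : ∀ j ∈ G, N ≤ j) :
    ∑ j ∈ G, ((j : ℝ) + 1) ^ (-s) ≤ (N : ℝ) ^ (1 - s) / (s - 1) := by
  have hN' : (0 : ℝ) < N := by exact_mod_cast hN
  have hsub : G ⊆ Ico N (G.sup id + 1) := fun j hj =>
    mem_Ico.2 ⟨hG j hj, Nat.lt_succ_of_le (le_sup (f := id) hj)⟩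
  have anti : AntitoneOn (fun x : ℝ => x ^ (-s)) (Set.Icc (N : ℝ) (G.sup id + 1 : ℕ)) :=
    fun a ha b _ hab => rpow_le_rpow_of_nonpos (hN'.trans_le ha.1) hab (by linarith)
  calc ∑ j ∈ G, ((j : ℝ) + 1) ^ (-s)
      ≤ ∑ j ∈ Ico N (G.sup id + 1), (((j + 1 : ℕ) : ℝ)) ^ (-s) := by
        push_cast
        exact sum_le_sum_of_subset_of_nonneg hsub fun _ _ _ => by positivity
    _ ≤ ∫ x in Set.Ioi (N : ℝ), x ^ (-s) :=
        anti.sum_Ico_le_integral (integrableOn_Ioi_rpow_of_lt (by linarith) hN')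
          fun x hx => rpow_nonneg (hN'.trans hx).le _
    _ = (N : ℝ) ^ (1 - s) / (s - 1) := by
        rw [integral_Ioi_rpow_of_lt (by linarith) hN', neg_add_eq_sub, neg_div, ← div_neg,
          neg_sub]

lemma sum_abs_add_one_rpow_neg_le {s : ℝ} (hs : 1 < s) {N : ℕ} (hN : 0 < N)
    (G : Finset ℤ) (hG : ∀ m ∈ G, N ≤ m.natAbs) :
    ∑ m ∈ G, (|(m : ℝ)| + 1) ^ (-s) ≤ 2 * ((N : ℝ) ^ (1 - s) / (s - 1)) := by
  have hfiber : ∀ j : ℕ, #{m ∈ G | m.natAbs = j} ≤ 2 := fun j =>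
    (card_le_card (t := {(j : ℤ), -(j : ℤ)}) fun m hm => by
      rcases Int.natAbs_eq_iff.1 (mem_filter.1 hm).2 with rfl | rfl <;> simp).trans card_le_two
  calc ∑ m ∈ G, (|(m : ℝ)| + 1) ^ (-s)
      = ∑ j ∈ G.image Int.natAbs, #{m ∈ G | m.natAbs = j} • (((j : ℝ) + 1) ^ (-s)) := by
        rw [← sum_comp (fun j : ℕ => ((j : ℝ) + 1) ^ (-s))]
        simp only [Nat.cast_natAbs, Int.cast_abs]
    _ ≤ ∑ j ∈ G.image Int.natAbs, 2 * ((j : ℝ) + 1) ^ (-s) := by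
        refine sum_le_sum fun j _ => ?_
        rw [nsmul_eq_mul]
        gcongr
        exact_mod_cast hfiber j
    _ ≤ 2 * ((N : ℝ) ^ (1 - s) / (s - 1)) := by
        rw [← mul_sum]
        gcongr
        refine sum_natCast_add_one_rpow_neg_le hs hN _ fun j hj => ?_
        obtain ⟨m, hm, rfl⟩ := mem_image.1 hj
        exact hG m hm

lemma sum_ite_jb_rpow_neg_le {s : ℝ} (hs : 1 < s) (k : ℤ) (G : Finset ℤ) :
    ∑ m ∈ G, (if |(k : ℝ)| < 2 * |(m : ℝ)| then jb m ^ (-s) else 0)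
      ≤ 4 ^ s / (s - 1) * jb k ^ (1 - s) := by
  set N := k.natAbs / 2 + 1
  have hN : jb k ≤ 2 * N := by
    have : k.natAbs + 1 ≤ 2 * N := by omega
    have : |(k : ℝ)| + 1 ≤ 2 * N := by
      rw [← Int.cast_abs, ← Nat.cast_natAbs]
      exact_mod_cast this
    linarith [jb_le_one_add_abs k]
  have hjb (m : ℤ) : jb m ^ (-s) ≤ 2 ^ s * (|(m : ℝ)| + 1) ^ (-s) :=
    rpow_neg_le_two_rpow_mul (by positivity) (by linarith [one_le_jb m, abs_le_jb m])
      (by linarith)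
  set G' := G.filter fun m : ℤ => |(k : ℝ)| < 2 * |(m : ℝ)|
  have htail := sum_abs_add_one_rpow_neg_le hs (N := N) (by omega) G' fun m hm => by
    have : |k| < 2 * |m| := by exact_mod_cast (mem_filter.1 hm).2
    rw [Int.abs_eq_natAbs, Int.abs_eq_natAbs] at this
    omega
  have hNk : (N : ℝ) ^ (-(s - 1)) ≤ 2 ^ (s - 1) * jb k ^ (-(s - 1)) :=
    rpow_neg_le_two_rpow_mul (jb_pos k) hN (by linarith)
  rw [← sum_filter]
  calc ∑ m ∈ G', jb m ^ (-s)
      ≤ 2 ^ s * ∑ m ∈ G', (|(m : ℝ)| + 1) ^ (-s) := by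
        rw [mul_sum]
        exact sum_le_sum fun m _ => hjb m
    _ ≤ 2 ^ s * (2 * ((N : ℝ) ^ (1 - s) / (s - 1))) := by gcongr
    _ ≤ 2 ^ s * (2 * (2 ^ (s - 1) * jb k ^ (1 - s) / (s - 1))) := by
        rw [show 1 - s = -(s - 1) by ring]
        gcongr
    _ = 4 ^ s / (s - 1) * jb k ^ (1 - s) := by
        rw [show (4 : ℝ) = 2 * 2 by norm_num, mul_rpow zero_le_two zero_le_two,
          rpow_sub_one two_ne_zero]
        field_simp

lemma sum_comp_sub_le {g : ℤ → ℝ} {c : ℝ} (h : ∀ G : Finset ℤ, ∑ m ∈ G, g m ≤ c)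
    (a : ℤ) (G : Finset ℤ) : ∑ n ∈ G, g (n - a) ≤ c :=
  (sum_map G (Equiv.subRight a).toEmbedding g).symm.le.trans (h _)

lemma sum_jb_rpow_neg_mul_le {β γ : ℝ} (hγ : 0 ≤ γ) (hβγ : γ ≤ β) (hsum : 1 < β + γ)
    (k₁ k₂ : ℤ) (G : Finset ℤ) :
    ∑ n ∈ G, jb (n - k₁) ^ (-β) * jb (n - k₂) ^ (-γ)
      ≤ (2 ^ β + 2 ^ γ + 2 * (4 ^ (β + γ) / (β + γ - 1)))
        * (phi β (k₁ - k₂) * jb (k₁ - k₂) ^ (-γ)) := by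
  set k := k₁ - k₂
  have hk : ((k₁ : ℝ) - k₂) = k := by push_cast [k]; ring
  set J := jb k ^ (-γ)
  set near : ℤ → ℝ := fun m => if 2 * |(m : ℝ)| ≤ |(k : ℝ)| then jb m ^ (-β) else 0
  set far : ℤ → ℝ := fun m => if |(k : ℝ)| < 2 * |(m : ℝ)| then jb m ^ (-(β + γ)) else 0
  have hpoint (n : ℤ) : jb (n - k₁) ^ (-β) * jb (n - k₂) ^ (-γ)
      ≤ 2 ^ β * J * near (n - k₂) + 2 ^ γ * J * near (n - k₁) + far (n - k₁) + far (n - k₂) := by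
    have h := jb_rpow_neg_mul_le_regions hγ hβγ ((n : ℝ) - k₁) ((n : ℝ) - k₂)
    rw [show ((n : ℝ) - k₂) - (n - k₁) = k by rw [← hk]; ring] at h
    simpa only [near, far, Int.cast_sub] using h
  have hfar : jb k ^ (1 - (β + γ)) ≤ phi β k * J := by
    rw [show 1 - (β + γ) = (1 - β) + -γ by ring, rpow_add (jb_pos _)]
    exact mul_le_mul_of_nonneg_right (jb_rpow_le_phi (hγ.trans hβγ) k) (jb_rpow_nonneg _ _)
  rw [hk]
  calc ∑ n ∈ G, jb (n - k₁) ^ (-β) * jb (n - k₂) ^ (-γ)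
      ≤ ∑ n ∈ G, (2 ^ β * J * near (n - k₂) + 2 ^ γ * J * near (n - k₁)
          + far (n - k₁) + far (n - k₂)) := sum_le_sum fun n _ => hpoint n
    _ = 2 ^ β * J * ∑ n ∈ G, near (n - k₂) + 2 ^ γ * J * ∑ n ∈ G, near (n - k₁)
          + ∑ n ∈ G, far (n - k₁) + ∑ n ∈ G, far (n - k₂) := by
        simp only [sum_add_distrib, mul_sum]
    _ ≤ 2 ^ β * J * phi β k + 2 ^ γ * J * phi β k
          + 4 ^ (β + γ) / (β + γ - 1) * jb k ^ (1 - (β + γ))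
          + 4 ^ (β + γ) / (β + γ - 1) * jb k ^ (1 - (β + γ)) := by
        have hJ : 0 ≤ J := jb_rpow_nonneg _ _
        gcongr <;> apply sum_comp_sub_le
        · exact sum_ite_le_phi β k
        · exact sum_ite_le_phi β k
        · exact sum_ite_jb_rpow_neg_le hsum k
        · exact sum_ite_jb_rpow_neg_le hsum k
    _ ≤ (2 ^ β + 2 ^ γ + 2 * (4 ^ (β + γ) / (β + γ - 1))) * (phi β k * J) := by
        have hc : 0 ≤ 4 ^ (β + γ) / (β + γ - 1) := div_nonneg (by positivity) (by linarith)
        linarith [mul_le_mul_of_nonneg_left hfar hc]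

theorem sum_bracket_convolution_bound (β γ : ℝ) (hγ : 0 ≤ γ) (hβγ : γ ≤ β)
    (hsum : 1 < β + γ) :
    ∃ C : ℝ, 0 < C ∧ ∀ k₁ k₂ : ℤ,
      ∑' n : ℤ, jb (n - k₁) ^ (-β) * jb (n - k₂) ^ (-γ)
        ≤ C * phi β (k₁ - k₂) / jb (k₁ - k₂) ^ γ := by
  refine ⟨2 ^ β + 2 ^ γ + 2 * (4 ^ (β + γ) / (β + γ - 1)), by positivity, fun k₁ k₂ => ?_⟩
  rw [mul_div_assoc, div_eq_mul_inv (phi β _), ← rpow_neg (jb_pos _).le]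
  exact tsum_le_of_sum_le'
    (mul_nonneg (by positivity) (mul_nonneg (phi_nonneg _ _) (jb_rpow_nonneg _ _)))
    (sum_jb_rpow_neg_mul_le hγ hβγ hsum k₁ k₂)
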